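/- arXiv:2410.04326 — 2 statements merged into one kernel-verified Lean document; each statement's English description precedes it below -/
import Mathlib

section
/- Every stable ordered-union ultrafilter U on FIN is rapid: there is a function h : ω → ω (one may take h(n) = 2ⁿ − 1) such that for every sequence (P_n)_{n∈ω} of finite subsets of FIN there exists A ∈ U with |A ∩ P_n| ≤ h(n) for all n ∈ ω. -/
open Classical

attribute [local instance] Classical.propDecidable

set_option maxHeartbeats 1000000

/-! ### FIN and block sequences -/

/-- `FIN`: the finite nonempty subsets of `ℕ`. -/
abbrev FIN : Type := {s : Finset ℕ // s.Nonempty}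

instance : Inhabited FIN := ⟨⟨{0}, Finset.singleton_nonempty 0⟩⟩

/-- The least element of a member of `FIN`. -/
def sMin (s : FIN) : ℕ := s.1.min' s.2

/-- The greatest element of a member of `FIN`. -/
def sMax (s : FIN) : ℕ := s.1.max' s.2

/-- `minmax(s) = (min s, max s)`. -/
def minmaxF (s : FIN) : ℕ × ℕ := (sMin s, sMax s)

/-- `s <_b t`: the block `s` lies entirely below the block `t`. -/
def blt (s t : FIN) : Prop := sMax s < sMin t

/-- Union of two members of `FIN`. -/
def funion (s t : FIN) : FIN :=
  ⟨s.1 ∪ t.1, by rcases s.2 with ⟨x, hx⟩; exact ⟨x, Finset.mem_union_left _ hx⟩⟩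

/-- `X : ℕ → FIN` is an infinite block sequence. -/
def IsBSeq (X : ℕ → FIN) : Prop := ∀ i, blt (X i) (X (i + 1))

/-- A finite block sequence, coded as a list. -/
def IsFBSeq (a : List FIN) : Prop := a.Chain' blt

/-- `[X]`: the set of unions of finitely many (at least one) blocks of `X`. -/
def BU (X : ℕ → FIN) : Set FIN :=
  {s | ∃ I : Finset ℕ, I.Nonempty ∧ s.1 = I.biUnion fun i => (X i).1}

/-- `X ≤ Y` for infinite block sequences. -/
def seqLE (X Y : ℕ → FIN) : Prop := ∀ i, X i ∈ BU Y

/-- `a ≤ Y` for a finite block sequence `a`. -/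
def finLE (a : List FIN) (Y : ℕ → FIN) : Prop := ∀ s ∈ a, s ∈ BU Y

/-- every block of `a` lies below every block of `x`. -/
def listblt (a x : List FIN) : Prop := ∀ s ∈ a, ∀ t ∈ x, blt s t

/-- `X ≤* Y`: some tail `X/n` satisfies `X/n ≤ Y`. -/
def leStar (X Y : ℕ → FIN) : Prop := ∃ n : ℕ, ∀ i, n < sMin (X i) → X i ∈ BU Y

/-- `U` is an ordered-union ultrafilter on `FIN`. -/
def IsOrderedUnion (U : Ultrafilter FIN) : Prop :=
  ∀ A ∈ U, ∃ X : ℕ → FIN, IsBSeq X ∧ BU X ∈ U ∧ BU X ⊆ A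

/-- `U` is a stable ordered-union ultrafilter on `FIN`. -/
def IsStableOrderedUnion (U : Ultrafilter FIN) : Prop :=
  IsOrderedUnion U ∧
    ∀ Xs : ℕ → ℕ → FIN, (∀ i, IsBSeq (Xs i)) → (∀ i, BU (Xs i) ∈ U) →
      (∀ i, leStar (Xs (i + 1)) (Xs i)) →
      ∃ X : ℕ → FIN, IsBSeq X ∧ BU X ∈ U ∧ ∀ i, leStar X (Xs i)

/-! ### Tukey and Rudin–Keisler notions -/

/-- `B` is a filter base (cofinal subset) for the ultrafilter `U`. -/
def IsBaseFor {α : Type} (U : Ultrafilter α) (B : Set (Set α)) : Prop :=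
  (∀ b ∈ B, b ∈ U) ∧ ∀ A ∈ U, ∃ b ∈ B, b ⊆ A

/-- `V ≤_T U`: Tukey reducibility. -/
def TukeyLE {β α : Type} (V : Ultrafilter β) (U : Ultrafilter α) : Prop :=
  ∃ f : Set α → Set β, ∀ B : Set (Set α), IsBaseFor U B → IsBaseFor V (f '' B)

/-- `U ≡_T V`: Tukey equivalence. -/
def TukeyEquiv {α β : Type} (U : Ultrafilter α) (V : Ultrafilter β) : Prop :=
  TukeyLE U V ∧ TukeyLE V U

/-- `V` is nonprincipal. -/
def Nonprincipal {α : Type} (V : Ultrafilter α) : Prop := ∀ a : α, V ≠ pure a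

/-- `U` and `V` are isomorphic (Rudin–Keisler equivalent): some bijection of the base
sets maps one to the other. -/
def RKIso {α β : Type} (U : Ultrafilter α) (V : Ultrafilter β) : Prop :=
  ∃ e : α ≃ β, Ultrafilter.map (fun a => e a) U = V

/-- The Fubini limit `lim_{i → V} W_i`, an ultrafilter on `I × A`. -/
def fubini {I A : Type} (V : Ultrafilter I) (W : I → Ultrafilter A) : Ultrafilter (I × A) :=
  V.bind fun i => (W i).map fun a => (i, a)

/-- The class `C₀ = {U, U_min, U_max, U_minmax}`. -/
inductive InC0 (U : Ultrafilter FIN) : ∀ {α : Type}, Ultrafilter α → Prop where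
  | u : InC0 U U
  | min : InC0 U (U.map sMin)
  | max : InC0 U (U.map sMax)
  | minmax : InC0 U (U.map minmaxF)

/-- The class `C_{ω₁}` of countable Fubini iterates of `U, U_min, U_max, U_minmax`. -/
inductive InC (U : Ultrafilter FIN) : ∀ {α : Type}, Ultrafilter α → Prop where
  | base {α : Type} (V : Ultrafilter α) : InC0 U V → InC U V
  | fub {I A : Type} (V : Ultrafilter I) (W : I → Ultrafilter A) :
      InC0 U V → (∀ i, InC U (W i)) → InC U (fubini V W)

/-- The class `D_{ω₁}(W)` of countable Fubini iterates of a single ultrafilter `W`. -/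
inductive IterC {β : Type} (W : Ultrafilter β) : ∀ {α : Type}, Ultrafilter α → Prop where
  | base : IterC W W
  | fub {A : Type} (Ws : β → Ultrafilter A) : (∀ i, IterC W (Ws i)) → IterC W (fubini W Ws)

/-! ### Fronts -/

/-- `a` is an initial segment of the infinite block sequence `Y`. -/
def IsInit (a : List FIN) (Y : ℕ → FIN) : Prop := ∀ i : Fin a.length, a.get i = Y i

/-- Nash-Williams family: no member is a proper initial segment of another. -/
def IsNashWilliams (B : Set (List FIN)) : Prop :=
  ∀ a ∈ B, ∀ b ∈ B, a <+: b → a = b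

/-- `F` is a front on `X`. -/
def IsFront (F : Set (List FIN)) (X : ℕ → FIN) : Prop :=
  IsNashWilliams F ∧ (∀ a ∈ F, IsFBSeq a ∧ finLE a X) ∧
    ∀ Y : ℕ → FIN, IsBSeq Y → seqLE Y X → ∃ a ∈ F, IsInit a Y

/-- `F̂`: all initial segments of members of `F` (including the empty sequence). -/
def hatF (F : Set (List FIN)) : Set (List FIN) := {a | ∃ b ∈ F, a <+: b}

/-- `F|Y`. -/
def frontRestrict (F : Set (List FIN)) (Y : ℕ → FIN) : Set (List FIN) :=
  {a | a ∈ F ∧ finLE a Y}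

/-- `F̂|Y`. -/
def hatRestrict (F : Set (List FIN)) (Y : ℕ → FIN) : Set (List FIN) :=
  {a | a ∈ hatF F ∧ finLE a Y}

/-! ### Uniform fronts -/

/-- `X/n`, the tail of `X` made of blocks with minimum `> n`. -/
noncomputable def tailSeq (X : ℕ → FIN) (n : ℕ) : ℕ → FIN := fun j =>
  if h : ∃ i, n < sMin (X i) then X (Nat.find h + j) else X j

/-- `B_(s) = {a : s <_b a, s⌢a ∈ B}`. -/
def Bsub (B : Set (List FIN)) (s : FIN) : Set (List FIN) :=
  {a | (∀ t ∈ a, blt s t) ∧ (s :: a) ∈ B}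

/-- A set `A ⊆ FIN` is small if it contains no `[Z]`. -/
def IsSmallSet (A : Set FIN) : Prop := ∀ Z : ℕ → FIN, IsBSeq Z → ¬ BU Z ⊆ A

/-- `B` is `α`-uniform on `X`. -/
inductive AlphaUniform : Ordinal.{0} → Set (List FIN) → (ℕ → FIN) → Prop where
  | zero (X : ℕ → FIN) : AlphaUniform 0 ({([] : List FIN)} : Set (List FIN)) X
  | succ (β : Ordinal.{0}) (B : Set (List FIN)) (X : ℕ → FIN)
      (h : ∀ s ∈ BU X, AlphaUniform β (Bsub B s) (tailSeq X (sMax s))) :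
      AlphaUniform (β + 1) B X
  | limit (α : Ordinal.{0}) (B : Set (List FIN)) (X : ℕ → FIN) (f : FIN → Ordinal.{0})
      (hl : Order.IsSuccLimit α)
      (h1 : ∀ s ∈ BU X, f s < α)
      (h2 : ∀ s ∈ BU X, AlphaUniform (f s) (Bsub B s) (tailSeq X (sMax s)))
      (h3 : ∀ γ < α, IsSmallSet {s | s ∈ BU X ∧ f s ≤ γ}) :
      AlphaUniform α B X

/-- `B` is a uniform family on `X` (i.e. `α`-uniform for some `α < ω₁`). -/
def IsUniformFam (B : Set (List FIN)) (X : ℕ → FIN) : Prop :=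
  ∃ α : Ordinal.{0}, α < (Cardinal.aleph 1).ord ∧ AlphaUniform α B X

/-! ### Separation types and the canonical map `Γ_γ` -/

/-- The six labels `sm, min-sep, max-sep, minmax-sep, sss, vss`. -/
inductive SepType : Type where
  | sm | minsep | maxsep | minmaxsep | sss | vss
  deriving DecidableEq

/-- The maps on `FIN` associated to the labels. -/
def SepType.eval : SepType → FIN → Finset ℕ
  | .sm, _ => ∅
  | .minsep, s => {sMin s}
  | .maxsep, s => {sMax s}
  | .minmaxsep, s => {sMin s, sMax s}
  | .sss, s => s.1
  | .vss, s => s.1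

/-- One step `k_i ↦ k_{i+1}` in the construction of `Γ_γ(a)`. -/
noncomputable def nextIdx (γ : List FIN → SepType) (a : List FIN) (k : ℕ) : ℕ :=
  if a.length ≤ k then a.length
  else if γ (a.take k) = SepType.sss then
    (if h : ∃ m, k < m ∧ m ≤ a.length ∧ γ (a.take (m - 1)) = SepType.vss then Nat.find h
     else a.length)
  else if h2 : γ (a.take k) = SepType.minsep ∧
      ∃ l, k < l ∧ l < a.length ∧ γ (a.take l) ≠ SepType.sm then
    (if γ (a.take (Nat.find h2.2)) = SepType.maxsep then Nat.find h2.2 + 1 else k + 1)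
  else k + 1

/-- The sequence of cut points `k_0 = 0 < k_1 < ...` for `Γ_γ(a)`. -/
noncomputable def cuts (γ : List FIN → SepType) (a : List FIN) : ℕ → ℕ
  | 0 => 0
  | i + 1 => nextIdx γ a (cuts γ a i)

/-- The `i`-th entry `⋃_{k_i ≤ j < k_{i+1}} γ(a↾j)(a(j))` of `Γ_γ(a)`. -/
noncomputable def gammaSeg (γ : List FIN → SepType) (a : List FIN) (i : ℕ) : Finset ℕ :=
  (Finset.Ico (cuts γ a i) (cuts γ a (i + 1))).biUnion
    fun j => (γ (a.take j)).eval (a.getD j default)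

/-- `Γ_γ(a)`, with all terms equal to `∅` omitted. -/
noncomputable def GammaList (γ : List FIN → SepType) (a : List FIN) : List (Finset ℕ) :=
  ((List.range a.length).map (gammaSeg γ a)).filter fun s => decide (s ≠ (∅ : Finset ℕ))

/-- `x` is a finite block sequence with `a <_b x`, `x ≤ Y` and `a⌢x ∈ F`. -/
def ExtendsToFront (F : Set (List FIN)) (Y : ℕ → FIN) (a x : List FIN) : Prop :=
  IsFBSeq x ∧ listblt a x ∧ finLE x Y ∧ (a ++ x) ∈ F

/-- `l` is the least index `≥ 1` with `γ(a⌢(x↾l)) ≠ sm`. -/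
def FirstNonSm (γ : List FIN → SepType) (a x : List FIN) (l : ℕ) : Prop :=
  1 ≤ l ∧ l ≤ x.length ∧ γ (a ++ x.take l) ≠ SepType.sm ∧
    ∀ l', 1 ≤ l' → l' < l → γ (a ++ x.take l') = SepType.sm

/-- `γ` is admissible with respect to the front `F` on `X`. -/
structure Admissible (F : Set (List FIN)) (X : ℕ → FIN) (γ : List FIN → SepType) : Prop where
  cond1 : ∀ a ∈ hatF F, γ a = SepType.sss →
    ∀ x : List FIN, IsFBSeq x → listblt a x → (a ++ x) ∈ hatF F →
      ∀ k, γ (a ++ x.take k) = SepType.vss →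
        (∀ k' < k, γ (a ++ x.take k') ≠ SepType.vss) →
        ∀ l < k, γ (a ++ x.take l) = SepType.sm ∨ γ (a ++ x.take l) = SepType.sss
  cond2 : ∀ a ∈ hatF F \ F,
    (∀ x, ExtendsToFront F X a x → ∀ k ≤ x.length, γ (a ++ x.take k) = SepType.sm) ∨
    (∀ x, ExtendsToFront F X a x → ∃ k ≤ x.length, γ (a ++ x.take k) ≠ SepType.sm)
  cond3 : ∀ a ∈ hatF F \ F, γ a = SepType.minsep →
    (∀ x, ExtendsToFront F X a x → ∃ l, FirstNonSm γ a x l) →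
    ((∀ x, ExtendsToFront F X a x → ∀ l, FirstNonSm γ a x l →
        γ (a ++ x.take l) = SepType.maxsep) ∨
     (∀ x, ExtendsToFront F X a x → ∀ l, FirstNonSm γ a x l →
        γ (a ++ x.take l) ≠ SepType.maxsep))

/-! ### Marked concatenation, separating and mixing -/

/-- `a□⌢x`: concatenation, where the mark `m = true` (that is, `a↑`) means that the last
block of `a` is unioned with the first block of `x`. -/
def mcat (a : List FIN) (m : Bool) (x : List FIN) : List FIN :=
  match m, a.getLast?, x with
  | true, some s, t :: ts => a.dropLast ++ (funion s t :: ts)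
  | _, _, _ => a ++ x

/-- `[Y/a]`: the members of `[Y]` lying beyond all blocks of `a`. -/
def BUafter (Y : ℕ → FIN) (a : List FIN) : Set FIN :=
  {s | s ∈ BU Y ∧ ∀ t ∈ a, blt t s}

/-- `x` is a (possibly empty) finite block sequence `≤ Y/(a,b)`. -/
def leqAfter (x : List FIN) (Y : ℕ → FIN) (a b : List FIN) : Prop :=
  IsFBSeq x ∧ finLE x Y ∧ listblt a x ∧ listblt b x

/-- `Y` separates `a□` and `b□`. -/
def Separates (F : Set (List FIN)) (g : List FIN → ℕ) (Y : ℕ → FIN)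
    (a : List FIN) (m : Bool) (b : List FIN) (m' : Bool) : Prop :=
  ∀ x y : List FIN, leqAfter x Y a b → leqAfter y Y a b →
    mcat a m x ∈ F → mcat b m' y ∈ F → g (mcat a m x) ≠ g (mcat b m' y)

/-- `Y` mixes `a□` and `b□`. -/
def Mixes (F : Set (List FIN)) (g : List FIN → ℕ) (Y : ℕ → FIN)
    (a : List FIN) (m : Bool) (b : List FIN) (m' : Bool) : Prop :=
  ∀ Z : ℕ → FIN, IsBSeq Z → seqLE Z Y → ¬ Separates F g Z a m b m'

/-- `Y` decides `a□` and `b□`. -/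
def Decides (F : Set (List FIN)) (g : List FIN → ℕ) (Y : ℕ → FIN)
    (a : List FIN) (m : Bool) (b : List FIN) (m' : Bool) : Prop :=
  Separates F g Y a m b m' ∨ Mixes F g Y a m b m'

/-- `a□` is strongly mixed by `Y`. -/
def StronglyMixed (F : Set (List FIN)) (g : List FIN → ℕ) (Y : ℕ → FIN)
    (a : List FIN) (m : Bool) : Prop :=
  ∀ s ∈ BUafter Y a, ∀ t ∈ BUafter Y a,
    Mixes F g Y (mcat a m [s]) false (mcat a m [t]) false

/-- `a□` is min-separated by `Y`. -/
def MinSeparated (F : Set (List FIN)) (g : List FIN → ℕ) (Y : ℕ → FIN)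
    (a : List FIN) (m : Bool) : Prop :=
  ∀ s ∈ BUafter Y a, ∀ t ∈ BUafter Y a,
    (Mixes F g Y (mcat a m [s]) false (mcat a m [t]) false ↔ sMin s = sMin t)

/-- `a□` is max-separated by `Y`. -/
def MaxSeparated (F : Set (List FIN)) (g : List FIN → ℕ) (Y : ℕ → FIN)
    (a : List FIN) (m : Bool) : Prop :=
  ∀ s ∈ BUafter Y a, ∀ t ∈ BUafter Y a,
    (Mixes F g Y (mcat a m [s]) false (mcat a m [t]) false ↔ sMax s = sMax t)

/-- `a□` is minmax-separated by `Y`. -/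
def MinMaxSeparated (F : Set (List FIN)) (g : List FIN → ℕ) (Y : ℕ → FIN)
    (a : List FIN) (m : Bool) : Prop :=
  ∀ s ∈ BUafter Y a, ∀ t ∈ BUafter Y a,
    (Mixes F g Y (mcat a m [s]) false (mcat a m [t]) false ↔ (sMin s = sMin t ∧ sMax s = sMax t))

/-- `a□` is strongly separated by `Y`. -/
def StronglySeparated (F : Set (List FIN)) (g : List FIN → ℕ) (Y : ℕ → FIN)
    (a : List FIN) (m : Bool) : Prop :=
  ∀ s ∈ BUafter Y a, ∀ t ∈ BUafter Y a,
    (Mixes F g Y (mcat a m [s]) false (mcat a m [t]) false ↔ s = t)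

/-- `a□` is separated in some sense by `Y`. -/
def SepSomeSense (F : Set (List FIN)) (g : List FIN → ℕ) (Y : ℕ → FIN)
    (a : List FIN) (m : Bool) : Prop :=
  MinSeparated F g Y a m ∨ MaxSeparated F g Y a m ∨ MinMaxSeparated F g Y a m ∨
    StronglySeparated F g Y a m

/-- `a□` is completely decided by `Y`. -/
def CompletelyDecided (F : Set (List FIN)) (g : List FIN → ℕ) (Y : ℕ → FIN)
    (a : List FIN) (m : Bool) : Prop :=
  StronglyMixed F g Y a m ∨ SepSomeSense F g Y a m

/-- `a□` is still strongly separated by `Y`. -/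
def StillStronglySep (F : Set (List FIN)) (g : List FIN → ℕ) (Y : ℕ → FIN)
    (a : List FIN) (m : Bool) : Prop :=
  StronglySeparated F g Y a m ∧
    ∀ s ∈ BUafter Y a, Mixes F g Y (mcat a m [s]) false (a ++ [s]) true

/-- `a□` is very strongly separated by `Y`. -/
def VeryStronglySep (F : Set (List FIN)) (g : List FIN → ℕ) (Y : ℕ → FIN)
    (a : List FIN) (m : Bool) : Prop :=
  StronglySeparated F g Y a m ∧
    ∀ s ∈ BUafter Y a, Separates F g Y (mcat a m [s]) false (a ++ [s]) true

/-- A zero-one law: the relation `P s t` holds for all admissible `s <_b t ∈ [Y/(a,b)]`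
or for none of them. -/
def ZOL (Y : ℕ → FIN) (a b : List FIN) (D P : FIN → FIN → Prop) : Prop :=
  (∀ s t : FIN, s ∈ BUafter Y (a ++ b) → t ∈ BUafter Y (a ++ b) → blt s t → D s t → P s t) ∨
  (∀ s t : FIN, s ∈ BUafter Y (a ++ b) → t ∈ BUafter Y (a ++ b) → blt s t → D s t → ¬ P s t)

/-- `x` is a finite block sequence with `a <_b x`, `x ≤ Y` and `a□⌢x ∈ F`. -/
def ExtendsToFrontM (F : Set (List FIN)) (Y : ℕ → FIN) (a : List FIN) (m : Bool)
    (x : List FIN) : Prop :=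
  IsFBSeq x ∧ listblt a x ∧ finLE x Y ∧ mcat a m x ∈ F

/-- `k` is the least stage `≥ 1` such that `a⌢(x↾k)` is separated in some sense by `Y`. -/
def LeastSepStage (F : Set (List FIN)) (g : List FIN → ℕ) (Y : ℕ → FIN)
    (a x : List FIN) (k : ℕ) : Prop :=
  1 ≤ k ∧ k ≤ x.length ∧ SepSomeSense F g Y (a ++ x.take k) false ∧
    ∀ k', 1 ≤ k' → k' < k → ¬ SepSomeSense F g Y (a ++ x.take k') false

/-- `Y` is canonical for `g`. -/
def CanonicalFor (F : Set (List FIN)) (g : List FIN → ℕ) (Y : ℕ → FIN) : Prop :=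
  (∀ a ∈ hatRestrict F Y, ∀ b ∈ hatRestrict F Y, ∀ m m' : Bool, Decides F g Y a m b m') ∧
  (∀ a ∈ hatRestrict F Y, ∀ m : Bool, CompletelyDecided F g Y a m) ∧
  (∀ a ∈ hatRestrict F Y, ∀ ma ms : Bool,
    ZOL Y a a (fun s _ => mcat a ma [s] ∈ hatRestrict F Y)
      (fun s _ => Mixes F g Y a ma (mcat a ma [s]) ms)) ∧
  (∀ a ∈ hatRestrict F Y, ∀ b ∈ hatRestrict F Y, ∀ ma mb ms ms' : Bool,
    ZOL Y a b
      (fun s _ => mcat a ma [s] ∈ hatRestrict F Y ∧ mcat b mb [s] ∈ hatRestrict F Y)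
      (fun s _ => Mixes F g Y (mcat a ma [s]) ms (mcat b mb [s]) ms')) ∧
  (∀ a ∈ hatRestrict F Y, ∀ ma ms mt : Bool,
    ZOL Y a a
      (fun s t => mcat a ma [s] ∈ hatRestrict F Y ∧
        mcat (mcat a ma [s]) ms [t] ∈ hatRestrict F Y)
      (fun s t => Mixes F g Y (mcat a ma [s]) ms (mcat (mcat a ma [s]) ms [t]) mt)) ∧
  (∀ a ∈ hatRestrict F Y, ∀ b ∈ hatRestrict F Y, ∀ ma mb ms ms' mt : Bool,
    ZOL Y a b
      (fun s t => mcat a ma [s] ∈ hatRestrict F Y ∧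
        mcat (mcat b mb [s]) ms' [t] ∈ hatRestrict F Y)
      (fun s t => Mixes F g Y (mcat a ma [s]) ms (mcat (mcat b mb [s]) ms' [t]) mt)) ∧
  (∀ a : List FIN, ∀ m : Bool,
    ((a ∈ hatRestrict F Y ∧ a ∉ F) ∨ (a ∈ F ∧ finLE a Y ∧ m = true)) →
    ((∀ x, ExtendsToFrontM F Y a m x →
        ∀ k, 1 ≤ k → k ≤ x.length → StronglyMixed F g Y (mcat a m (x.take k)) false) ∨
     (∀ x, ExtendsToFrontM F Y a m x →
        ∃ k, 1 ≤ k ∧ k ≤ x.length ∧ SepSomeSense F g Y (mcat a m (x.take k)) false))) ∧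
  (∀ a ∈ hatRestrict F Y, MinSeparated F g Y a false →
    (∀ x, ExtendsToFrontM F Y a false x →
      ∃ k, 1 ≤ k ∧ k ≤ x.length ∧ SepSomeSense F g Y (a ++ x.take k) false) →
    ((∀ x, ExtendsToFrontM F Y a false x → ∀ k, LeastSepStage F g Y a x k →
        MaxSeparated F g Y (a ++ x.take k) false) ∨
     (∀ x, ExtendsToFrontM F Y a false x → ∀ k, LeastSepStage F g Y a x k →
        ¬ MaxSeparated F g Y (a ++ x.take k) false)))

/-- The tripling operation `Y ↦ (Y(3i) ∪ Y(3i+1) ∪ Y(3i+2))_{i}`. -/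
def tripleUp (Y : ℕ → FIN) : ℕ → FIN := fun i =>
  funion (Y (3 * i)) (funion (Y (3 * i + 1)) (Y (3 * i + 2)))

/-- `Z/a`. -/
noncomputable def seqAfter (Z : ℕ → FIN) (a : List FIN) : ℕ → FIN :=
  match a.getLast? with
  | none => Z
  | some s => tailSeq Z (sMax s)

/-- `Z/(a,b)`. -/
noncomputable def seqAfter2 (Z : ℕ → FIN) (a b : List FIN) : ℕ → FIN :=
  seqAfter (seqAfter Z a) b

/-- `γ` is the parameter function of the canonical `Y`: it records, for each
`a ∈ (F̂∖F)|Y`, the way in which `a` is completely decided by `Y`. -/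
def IsParameterOf (F : Set (List FIN)) (g : List FIN → ℕ) (Y : ℕ → FIN)
    (γ : List FIN → SepType) : Prop :=
  ∀ a : List FIN, a ∈ hatF F → a ∉ F → finLE a Y →
    ((γ a = SepType.sm ↔ StronglyMixed F g Y a false) ∧
     (γ a = SepType.minsep ↔ MinSeparated F g Y a false) ∧
     (γ a = SepType.maxsep ↔ MaxSeparated F g Y a false) ∧
     (γ a = SepType.minmaxsep ↔ MinMaxSeparated F g Y a false) ∧
     (γ a = SepType.sss ↔ StillStronglySep F g Y a false) ∧
     (γ a = SepType.vss ↔ VeryStronglySep F g Y a false))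

/-- The family `U↾F` generated by the sets `F|Y` with `[Y] ∈ U`, `Y ≤ X`. -/
def UFront (U : Ultrafilter FIN) (F : Set (List FIN)) (X : ℕ → FIN) : Set (Set (List FIN)) :=
  {A | A ⊆ F ∧ ∃ Y : ℕ → FIN, IsBSeq Y ∧ seqLE Y X ∧ BU Y ∈ U ∧ frontRestrict F Y ⊆ A}
/-!
Bound the maxima of the blocks in `P 0, …, P n` by a monotone `M n`. Almost every `s` in `U` has
`max s > M (min s)`: otherwise some `[W] ∈ U` consists of blocks with `max s ≤ M (min s)`, which fails
for `W 0 ∪ W j` with `j > M (min (W 0))`. So some `[X] ∈ U` has `max (X i) > M i` for all `i`; then a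
member of `P n ∩ [X]` is a union of blocks among `X 0, …, X (n - 1)`, and there are `2 ^ n - 1` of those.
-/

lemma sMin_le_sMax (s : FIN) : sMin s ≤ sMax s :=
  Finset.min'_le _ _ (Finset.max'_mem _ _)

lemma sMin_funion (s t : FIN) : sMin (funion s t) = min (sMin s) (sMin t) :=
  Finset.min'_union s.2 t.2

lemma sMax_le_sMax_of_subset {s t : FIN} (h : s.1 ⊆ t.1) : sMax s ≤ sMax t :=
  Finset.max'_subset s.2 h

lemma IsBSeq.strictMono_sMin {X : ℕ → FIN} (hX : IsBSeq X) : StrictMono (sMin ∘ X) :=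
  strictMono_nat_of_lt_succ fun i => (sMin_le_sMax (X i)).trans_lt (hX i)

lemma IsBSeq.le_sMin {X : ℕ → FIN} (hX : IsBSeq X) (i : ℕ) : i ≤ sMin (X i) :=
  hX.strictMono_sMin.id_le i

lemma apply_mem_BU (X : ℕ → FIN) (i : ℕ) : X i ∈ BU X :=
  ⟨{i}, Finset.singleton_nonempty i, by simp⟩

lemma funion_mem_BU {X : ℕ → FIN} {s t : FIN} (hs : s ∈ BU X) (ht : t ∈ BU X) :
    funion s t ∈ BU X := by
  obtain ⟨I, hI, hsI⟩ := hs
  obtain ⟨J, -, htJ⟩ := ht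
  exact ⟨I ∪ J, hI.mono Finset.subset_union_left, by rw [Finset.union_biUnion, ← hsI, ← htJ]; rfl⟩

lemma sMax_apply_le_of_eq_biUnion {X : ℕ → FIN} {s : FIN} {I : Finset ℕ}
    (hs : s.1 = I.biUnion fun i => (X i).1) {i : ℕ} (hi : i ∈ I) : sMax (X i) ≤ sMax s :=
  sMax_le_sMax_of_subset (hs ▸ Finset.subset_biUnion_of_mem (fun i => (X i).1) hi)

lemma IsOrderedUnion.setOf_lt_sMax_mem {U : Ultrafilter FIN} (hU : IsOrderedUnion U)
    (f : ℕ → ℕ) : {s : FIN | f (sMin s) < sMax s} ∈ U := by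
  by_contra hc
  obtain ⟨W, hW, -, hWc⟩ := hU _ (Ultrafilter.compl_mem_iff_notMem.mpr hc)
  set j := f (sMin (W 0)) + 1
  have hmem : funion (W 0) (W j) ∈ BU W := funion_mem_BU (apply_mem_BU W 0) (apply_mem_BU W j)
  have hmin : sMin (funion (W 0) (W j)) = sMin (W 0) :=
    (sMin_funion _ _).trans (min_eq_left (hW.strictMono_sMin.monotone (Nat.zero_le j)))
  have hmax : j ≤ sMax (funion (W 0) (W j)) :=
    calc j ≤ sMin (W j) := hW.le_sMin j
      _ ≤ sMax (W j) := sMin_le_sMax _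
      _ ≤ _ := sMax_le_sMax_of_subset Finset.subset_union_right
  have := hWc hmem
  simp only [Set.mem_compl_iff, Set.mem_ofPred_eq, hmin, not_lt] at this
  omega

lemma IsOrderedUnion.exists_lt_sMax {U : Ultrafilter FIN} (hU : IsOrderedUnion U) {M : ℕ → ℕ}
    (hM : Monotone M) : ∃ X : ℕ → FIN, IsBSeq X ∧ BU X ∈ U ∧ ∀ i, M i < sMax (X i) := by
  obtain ⟨X, hX, hXU, hXsub⟩ := hU _ (hU.setOf_lt_sMax_mem M)
  exact ⟨X, hX, hXU, fun i => (hM (hX.le_sMin i)).trans_lt (hXsub (apply_mem_BU X i))⟩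

lemma ncard_le_of_forall_eq_biUnion_range (X : ℕ → FIN) {S : Set FIN} {n : ℕ}
    (hS : ∀ s ∈ S, ∃ I ⊆ Finset.range n, I.Nonempty ∧ s.1 = I.biUnion fun i => (X i).1) :
    S.ncard ≤ 2 ^ n - 1 := by
  let unions : Finset (Finset ℕ) :=
    ((Finset.range n).powerset.erase ∅).image fun I => I.biUnion fun i => (X i).1
  calc S.ncard ≤ (unions : Set (Finset ℕ)).ncard := by
        refine Set.ncard_le_ncard_of_injOn Subtype.val (fun s hs => ?_) Subtype.val_injective.injOn
        obtain ⟨I, hIn, hI, hsI⟩ := hS s hs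
        exact Finset.mem_coe.mpr <| Finset.mem_image.mpr
          ⟨I, Finset.mem_erase.mpr ⟨hI.ne_empty, Finset.mem_powerset.mpr hIn⟩, hsI.symm⟩
    _ = unions.card := Set.ncard_coe_finset _
    _ ≤ ((Finset.range n).powerset.erase ∅).card := Finset.card_image_le
    _ = 2 ^ n - 1 := by simp [Finset.card_erase_of_mem]

lemma ncard_inter_BU_le {X : ℕ → FIN} {M : ℕ → ℕ} (hM : Monotone M)
    (hX : ∀ i, M i < sMax (X i)) {S : Set FIN} {n : ℕ} (hS : ∀ s ∈ S, sMax s ≤ M n) :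
    (S ∩ BU X).ncard ≤ 2 ^ n - 1 := by
  refine ncard_le_of_forall_eq_biUnion_range X
    fun s ⟨hsS, I, hI, hsI⟩ => ⟨I, fun i hi => Finset.mem_range.mpr ?_, hI, hsI⟩
  by_contra! hni
  have := calc M n ≤ M i := hM hni
    _ < sMax (X i) := hX i
    _ ≤ sMax s := sMax_apply_le_of_eq_biUnion hsI hi
  exact (hS s hsS).not_gt this

/-- every stable ordered-union ultrafilter is rapid, as witnessed by
`h n = 2 ^ n - 1`. -/
theorem stmt2 (U : Ultrafilter FIN) (hU : IsStableOrderedUnion U) :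
    ∃ h : ℕ → ℕ, h = (fun n => 2 ^ n - 1) ∧
      ∀ P : ℕ → Finset FIN, ∃ A ∈ U, ∀ n : ℕ, ((↑(P n) : Set FIN) ∩ A).ncard ≤ h n := by
  refine ⟨fun n => 2 ^ n - 1, rfl, fun P => ?_⟩
  let M := partialSups fun n => (P n).sup sMax
  obtain ⟨X, -, hXU, hX⟩ := hU.1.exists_lt_sMax M.monotone
  refine ⟨BU X, hXU, fun n => ncard_inter_BU_le M.monotone hX fun s hs => ?_⟩
  exact (Finset.le_sup (f := sMax) hs).trans (le_partialSups (fun n => (P n).sup sMax) n)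
end

section
/- Let F be a front on X ∈ FIN^[∞] and g : F → ω. For every Y ≤ X there is Y' ≤ Y such that Y' decides a□ and b□ for all a, b ∈ F̂|Y' and all choices of marks. -/
open Classical

attribute [local instance] Classical.propDecidable

set_option maxHeartbeats 1000000

/-! Whether `Y` decides `a□` and `b□` depends only on the blocks of `Y` beyond `a` and `b`,
and it can always be achieved by shrinking `Y`: either some `Z ≤ Y` separates them, or `Y` mixes
them. Only finitely many block sequences have all their blocks below a given bound, so a single
`W ≤ Y` decides all pairs of them at once. Fusing: let stage `n + 1` be such a `W` below stage `n`
minus its first block, for the bound `max Y'(n) + 1`, and let `Y'(n)` be the first block of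
stage `n`. Any `a, b ≤ Y'` lie below `max Y'(k) + 1`, where `Y'(k)` is the last block of `Y'`
they use, and the blocks of `Y'` beyond them come from stage `k + 1`, which decides `a□`, `b□`. -/

lemma sMin_le_of_mem {s : FIN} {x : ℕ} (hx : x ∈ s.1) : sMin s ≤ x := Finset.min'_le _ _ hx

lemma le_sMax_of_mem {s : FIN} {x : ℕ} (hx : x ∈ s.1) : x ≤ sMax s := Finset.le_max' _ _ hx

lemma sMin_mem (s : FIN) : sMin s ∈ s.1 := Finset.min'_mem _ _

lemma sMax_mem (s : FIN) : sMax s ∈ s.1 := Finset.max'_mem _ _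

lemma blt_trans {s t u : FIN} (hst : blt s t) (htu : blt t u) : blt s u :=
  hst.trans_le ((sMin_le_sMax t).trans htu.le)

namespace IsBSeq

variable {Y : ℕ → FIN}

lemma blt_of_lt (hY : IsBSeq Y) {i j : ℕ} (hij : i < j) : blt (Y i) (Y j) := by
  induction j, hij using Nat.le_induction with
  | base => exact hY i
  | succ j _ ih => exact blt_trans ih (hY j)

lemma sMax_le_sMax (hY : IsBSeq Y) {i j : ℕ} (hij : i ≤ j) : sMax (Y i) ≤ sMax (Y j) := by
  rcases hij.lt_or_eq with hij | rfl
  · exact ((hY.blt_of_lt hij).trans_le (sMin_le_sMax _)).le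
  · exact le_rfl

lemma le_sMin_s9 (hY : IsBSeq Y) (n : ℕ) : n ≤ sMin (Y n) := by
  induction n with
  | zero => exact Nat.zero_le _
  | succ n ih => exact (ih.trans (sMin_le_sMax _)).trans_lt (hY n)

lemma shift (hY : IsBSeq Y) (n : ℕ) : IsBSeq fun j => Y (n + j) := fun j => hY (n + j)

end IsBSeq

lemma mem_BU_apply (Y : ℕ → FIN) (i : ℕ) : Y i ∈ BU Y :=
  ⟨{i}, Finset.singleton_nonempty i, by simp⟩

lemma seqLE_refl (Y : ℕ → FIN) : seqLE Y Y := mem_BU_apply Y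

lemma seqLE_shift (Y : ℕ → FIN) (n : ℕ) : seqLE (fun j => Y (n + j)) Y :=
  fun j => mem_BU_apply Y (n + j)

lemma mem_BU_of_biUnion {Y Z : ℕ → FIN} {s : FIN} {I : Finset ℕ} (hI : I.Nonempty)
    (hs : s.1 = I.biUnion fun i => (Z i).1) (hZ : ∀ i ∈ I, Z i ∈ BU Y) : s ∈ BU Y := by
  choose! J hJ hZJ using hZ
  refine ⟨I.biUnion J, ?_, ?_⟩
  · obtain ⟨i, hi⟩ := hI
    exact Finset.biUnion_nonempty.mpr ⟨i, hi, hJ i hi⟩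
  · rw [hs, Finset.biUnion_biUnion]
    exact Finset.biUnion_congr rfl fun i hi => hZJ i hi

lemma BU_mono {Z Y : ℕ → FIN} (h : seqLE Z Y) : BU Z ⊆ BU Y :=
  fun _ ⟨_, hI, hs⟩ => mem_BU_of_biUnion hI hs fun i _ => h i

lemma seqLE.trans {A B C : ℕ → FIN} (hAB : seqLE A B) (hBC : seqLE B C) : seqLE A C :=
  fun i => BU_mono hBC (hAB i)

lemma exists_mem_of_mem_BU {Y : ℕ → FIN} {s : FIN} (hs : s ∈ BU Y) {x : ℕ} (hx : x ∈ s.1) :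
    ∃ i, x ∈ (Y i).1 ∧ (Y i).1 ⊆ s.1 := by
  obtain ⟨I, -, hsI⟩ := hs
  rw [hsI] at hx ⊢
  obtain ⟨i, hi, hxi⟩ := Finset.mem_biUnion.mp hx
  exact ⟨i, hxi, Finset.subset_biUnion_of_mem (fun j => (Y j).1) hi⟩

lemma exists_sMax_eq_of_mem_BU {Y : ℕ → FIN} {s : FIN} (hs : s ∈ BU Y) :
    ∃ k, sMax s = sMax (Y k) := by
  obtain ⟨k, hk, hsub⟩ := exists_mem_of_mem_BU hs (sMax_mem s)
  exact ⟨k, le_antisymm (le_sMax_of_mem hk) (le_sMax_of_mem (hsub (sMax_mem _)))⟩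

lemma IsBSeq.blt_of_mem_BU_shift {Y : ℕ → FIN} (hY : IsBSeq Y) {s : FIN}
    (hs : s ∈ BU fun j => Y (1 + j)) : blt (Y 0) s := by
  obtain ⟨i, hi, -⟩ := exists_mem_of_mem_BU hs (sMin_mem s)
  exact (hY.blt_of_lt (by omega : 0 < 1 + i)).trans_le (sMin_le_of_mem hi)

lemma IsBSeq.mem_BU_shift {Y : ℕ → FIN} (hY : IsBSeq Y) {s : FIN} (hs : s ∈ BU Y) {k : ℕ}
    (hk : sMax (Y k) < sMin s) : s ∈ BU fun j => Y (k + 1 + j) := by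
  obtain ⟨I, hI, hsI⟩ := hs
  refine mem_BU_of_biUnion hI hsI fun i hi => ?_
  have hsub : (Y i).1 ⊆ s.1 := hsI ▸ Finset.subset_biUnion_of_mem (fun j => (Y j).1) hi
  have hki : k < i := by
    by_contra! hik
    have := hY.sMax_le_sMax hik
    have := sMin_le_of_mem (hsub (sMax_mem (Y i)))
    omega
  obtain ⟨j, rfl⟩ := Nat.exists_eq_add_of_le hki
  exact mem_BU_apply _ j

/-- `prefixBound Y n` bounds the blocks `Y 0, …, Y (n - 1)` strictly from above. -/
def prefixBound (Y : ℕ → FIN) : ℕ → ℕ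
  | 0 => 0
  | n + 1 => sMax (Y n) + 1

lemma IsBSeq.exists_prefixBound {Y : ℕ → FIN} (hY : IsBSeq Y) {l : List FIN} (hl : finLE l Y) :
    ∃ n, (∀ t ∈ l, sMax t < prefixBound Y n) ∧
      ∀ s ∈ BU Y, (∀ t ∈ l, blt t s) → s ∈ BU fun j => Y (n + j) := by
  obtain rfl | hl0 := eq_or_ne l []
  · exact ⟨0, by simp, fun s hs _ => by simpa using hs⟩
  obtain ⟨t, ht, htmax⟩ :=
    l.toFinset.exists_max_image sMax (List.toFinset_nonempty_iff l |>.mpr hl0)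
  rw [List.mem_toFinset] at ht
  obtain ⟨k, hk⟩ := exists_sMax_eq_of_mem_BU (hl t ht)
  refine ⟨k + 1, fun u hu => ?_, fun s hs hbeyond => hY.mem_BU_shift hs (hk ▸ hbeyond t ht)⟩
  have := htmax u (List.mem_toFinset.mpr hu)
  simp only [prefixBound]
  omega

section Decides

variable {F : Set (List FIN)} {g : List FIN → ℕ} {W Z : ℕ → FIN} {a b : List FIN} {m m' : Bool}

lemma Separates.anti (hsep : Separates F g W a m b m') (h : seqLE Z W) :
    Separates F g Z a m b m' :=
  fun x y ⟨hx, hxZ, hax, hbx⟩ ⟨hy, hyZ, hay, hby⟩ =>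
    hsep x y ⟨hx, fun s hs => BU_mono h (hxZ s hs), hax, hbx⟩
      ⟨hy, fun s hs => BU_mono h (hyZ s hs), hay, hby⟩

lemma Decides.of_forall_beyond (hdec : Decides F g W a m b m')
    (H : ∀ s ∈ BU Z, (∀ t ∈ a ++ b, blt t s) → s ∈ BU W) : Decides F g Z a m b m' := by
  have hle : ∀ x, leqAfter x Z a b → leqAfter x W a b := fun x ⟨hx, hxZ, hax, hbx⟩ =>
    ⟨hx, fun s hs => H s (hxZ s hs) fun t ht =>
      (List.mem_append.mp ht).elim (hax t · s hs) (hbx t · s hs), hax, hbx⟩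
  refine hdec.imp (fun hsep x y hx hy => hsep x y (hle x hx) (hle y hy)) ?_
  -- a `V ≤ Z` separating `a□, b□` may be cut down to its tail beyond `a` and `b`, which is `≤ W`
  intro hmix V hV hVZ hsep
  obtain ⟨M, hM⟩ : ∃ M, ∀ t ∈ a ++ b, sMax t ≤ M :=
    ⟨_, fun t ht => List.le_sum_of_mem (List.mem_map_of_mem (f := sMax) ht)⟩
  refine hmix (fun j => V (M + 1 + j)) (hV.shift _) (fun j => H _ (hVZ _) fun t ht => ?_)
    (hsep.anti (seqLE_shift V _))
  have := hM t ht
  have := hV.le_sMin_s9 (M + 1 + j)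
  exact show sMax t < sMin (V (M + 1 + j)) by omega

lemma Decides.anti (hdec : Decides F g W a m b m') (h : seqLE Z W) : Decides F g Z a m b m' :=
  hdec.of_forall_beyond fun _ hs _ => BU_mono h hs

variable (F g) in
lemma exists_decides (hW : IsBSeq W) (a : List FIN) (m : Bool) (b : List FIN) (m' : Bool) :
    ∃ W', IsBSeq W' ∧ seqLE W' W ∧ Decides F g W' a m b m' := by
  by_cases h : ∃ Z, IsBSeq Z ∧ seqLE Z W ∧ Separates F g Z a m b m'
  · obtain ⟨Z, hZ, hZW, hsep⟩ := h
    exact ⟨Z, hZ, hZW, .inl hsep⟩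
  · exact ⟨W, hW, seqLE_refl W, .inr fun Z hZ hZW hsep => h ⟨Z, hZ, hZW, hsep⟩⟩

end Decides

lemma exists_seqLE_forall_of_finite {ι : Type*} {P : ι → (ℕ → FIN) → Prop}
    (hP : ∀ i {Z W}, seqLE Z W → P i W → P i Z)
    (hdense : ∀ i W, IsBSeq W → ∃ W', IsBSeq W' ∧ seqLE W' W ∧ P i W')
    {s : Set ι} (hs : s.Finite) {W : ℕ → FIN} (hW : IsBSeq W) :
    ∃ W', IsBSeq W' ∧ seqLE W' W ∧ ∀ i ∈ s, P i W' := by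
  induction s, hs using Set.Finite.induction_on with
  | empty => exact ⟨W, hW, seqLE_refl W, by simp⟩
  | @insert i s _ _ ih =>
    obtain ⟨W₁, hW₁, hW₁W, hs⟩ := ih
    obtain ⟨W₂, hW₂, hW₂W₁, hi⟩ := hdense i W₁ hW₁
    refine ⟨W₂, hW₂, hW₂W₁.trans hW₁W, ?_⟩
    rintro j (rfl | hj)
    exacts [hi, hP j hW₂W₁ (hs j hj)]

lemma exists_decides_of_finite (F : Set (List FIN)) (g : List FIN → ℕ) {L : Set (List FIN)}
    (hL : L.Finite) {W : ℕ → FIN} (hW : IsBSeq W) :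
    ∃ W', IsBSeq W' ∧ seqLE W' W ∧ ∀ a ∈ L, ∀ b ∈ L, ∀ m m' : Bool, Decides F g W' a m b m' := by
  obtain ⟨W', hW', hW'W, hdec⟩ := exists_seqLE_forall_of_finite
    (P := fun (p : List FIN × Bool × List FIN × Bool) V => Decides F g V p.1 p.2.1 p.2.2.1 p.2.2.2)
    (fun _ _ _ h hdec => hdec.anti h) (fun _ _ hV => exists_decides F g hV _ _ _ _)
    (hL.prod (Set.finite_univ.prod (hL.prod Set.finite_univ))) hW
  exact ⟨W', hW', hW'W, fun a ha b hb m m' => hdec (a, m, b, m') ⟨ha, trivial, hb, trivial⟩⟩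

lemma IsFBSeq.length_le {a : List FIN} (ha : IsFBSeq a) {c : ℕ} (hc : ∀ t ∈ a, sMax t < c) :
    a.length ≤ c := by
  have hsorted : (a.map sMax).Pairwise (· < ·) :=
    ((List.isChain_map sMax).mpr (ha.imp fun s t hst => hst.trans_le (sMin_le_sMax t))).pairwise
  have hsub : a.map sMax ⊆ List.range c := by
    intro x hx
    obtain ⟨t, ht, rfl⟩ := List.mem_map.mp hx
    exact List.mem_range.mpr (hc t ht)
  simpa using (hsorted.nodup.subperm hsub).length_le

lemma IsFront.isFBSeq_of_mem_hatF {F : Set (List FIN)} {X : ℕ → FIN} (hF : IsFront F X)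
    {a : List FIN} (ha : a ∈ hatF F) : IsFBSeq a :=
  let ⟨_, hb, hab⟩ := ha
  List.IsChain.prefix (hF.2.1 _ hb).1 hab

def boundedFBSeqs (c : ℕ) : Set (List FIN) := {a | IsFBSeq a ∧ ∀ t ∈ a, sMax t < c}

lemma finite_boundedFBSeqs (c : ℕ) : (boundedFBSeqs c).Finite := by
  have hblocks : {t : FIN | sMax t < c}.Finite := by
    refine ((Finset.range c).powerset.finite_toSet.preimage Subtype.val_injective.injOn).subset ?_
    intro t ht
    simp only [Set.mem_preimage, Finset.coe_powerset, Set.mem_powerset_iff,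
      Finset.coe_subset] at ht ⊢
    exact fun x hx => Finset.mem_range.mpr ((le_sMax_of_mem hx).trans_lt ht)
  have : Finite {t : FIN // sMax t < c} := hblocks.to_subtype
  refine ((List.finite_length_le {t : FIN // sMax t < c} c).image (List.map Subtype.val)).subset ?_
  rintro a ⟨ha, hc⟩
  have hlen := ha.length_le hc
  lift a to List {t : FIN // sMax t < c} using hc
  exact ⟨a, by simpa using hlen, rfl⟩

theorem exists_fusion {D : ℕ → (ℕ → FIN) → Prop}
    (hD : ∀ c W, IsBSeq W → ∃ W', IsBSeq W' ∧ seqLE W' W ∧ D c W')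
    {Y : ℕ → FIN} (hY : IsBSeq Y) :
    ∃ Y', IsBSeq Y' ∧ seqLE Y' Y ∧
      ∀ n, ∃ W, D (prefixBound Y' n) W ∧ seqLE (fun j => Y' (n + j)) W := by
  have hD' : ∀ c (W : {W // IsBSeq W}), ∃ W' : {W // IsBSeq W}, seqLE W'.1 W.1 ∧ D c W'.1 :=
    fun c W => let ⟨W', hW', h⟩ := hD c W.1 W.2; ⟨⟨W', hW'⟩, h⟩
  choose R hR using hD'
  -- stage `n + 1` refines stage `n` with its first block removed; `Y' n` is that first block
  obtain ⟨S, hS0, hS⟩ : ∃ S : ℕ → {W // IsBSeq W}, S 0 = R 0 ⟨Y, hY⟩ ∧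
      ∀ n, S (n + 1) = R (sMax ((S n).1 0) + 1) ⟨fun j => (S n).1 (1 + j), (S n).2.shift 1⟩ :=
    ⟨fun n => Nat.rec (R 0 ⟨Y, hY⟩)
      (fun _ T => R (sMax (T.1 0) + 1) ⟨fun j => T.1 (1 + j), T.2.shift 1⟩) n, rfl, fun _ => rfl⟩
  have hstep (n : ℕ) : seqLE (S (n + 1)).1 fun j => (S n).1 (1 + j) := hS n ▸ (hR _ _).1
  have hanti {k n : ℕ} (h : k ≤ n) : seqLE (S n).1 (S k).1 := by
    induction n, h using Nat.le_induction with
    | base => exact seqLE_refl _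
    | succ n _ ih => exact ((hstep n).trans (seqLE_shift _ 1)).trans ih
  refine ⟨fun n => (S n).1 0, fun n => ?_, fun n => ?_, fun n => ⟨(S n).1, ?_, fun j => ?_⟩⟩
  · exact (S n).2.blt_of_mem_BU_shift (BU_mono (hstep n) (mem_BU_apply _ 0))
  · exact BU_mono ((hanti n.zero_le).trans (hS0 ▸ (hR 0 _).1)) (mem_BU_apply _ 0)
  · cases n with
    | zero => exact hS0 ▸ (hR 0 _).2
    | succ n => exact hS n ▸ (hR _ _).2
  · exact BU_mono (hanti (Nat.le_add_right n j)) (mem_BU_apply _ 0)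

theorem stmt9_general (F : Set (List FIN)) (X : ℕ → FIN) (hF : IsFront F X)
    (g : List FIN → ℕ) :
    ∀ Y : ℕ → FIN, IsBSeq Y → seqLE Y X →
      ∃ Y' : ℕ → FIN, IsBSeq Y' ∧ seqLE Y' Y ∧
        ∀ a ∈ hatRestrict F Y', ∀ b ∈ hatRestrict F Y', ∀ m m' : Bool,
          Decides F g Y' a m b m' := by
  intro Y hY _
  obtain ⟨Y', hY', hY'Y, hfusion⟩ := exists_fusion
    (D := fun c W => ∀ a ∈ boundedFBSeqs c, ∀ b ∈ boundedFBSeqs c, ∀ m m' : Bool,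
      Decides F g W a m b m')
    (fun c _ hW => exists_decides_of_finite F g (finite_boundedFBSeqs c) hW) hY
  refine ⟨Y', hY', hY'Y, fun a ha b hb m m' => ?_⟩
  obtain ⟨n, hbound, hbeyond⟩ :=
    hY'.exists_prefixBound (l := a ++ b) fun t ht => (List.mem_append.mp ht).elim (ha.2 t) (hb.2 t)
  obtain ⟨W, hWdec, hY'W⟩ := hfusion n
  have hWab := hWdec a ⟨hF.isFBSeq_of_mem_hatF ha.1, fun t ht => hbound t (List.mem_append_left b ht)⟩
    b ⟨hF.isFBSeq_of_mem_hatF hb.1, fun t ht => hbound t (List.mem_append_right a ht)⟩ m m'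
  exact hWab.of_forall_beyond fun s hs hs' => BU_mono hY'W (hbeyond s hs hs')

/-- below every `Y ≤ X` there is `Y' ≤ Y` deciding all pairs `a□, b□`
with `a, b ∈ F̂|Y'`. -/
theorem stmt9 (F : Set (List FIN)) (X : ℕ → FIN) (hXB : IsBSeq X) (hF : IsFront F X)
    (g : List FIN → ℕ) :
    ∀ Y : ℕ → FIN, IsBSeq Y → seqLE Y X →
      ∃ Y' : ℕ → FIN, IsBSeq Y' ∧ seqLE Y' Y ∧
        ∀ a ∈ hatRestrict F Y', ∀ b ∈ hatRestrict F Y', ∀ m m' : Bool,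
          Decides F g Y' a m b m' :=
  stmt9_general F X hF g
end
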